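/- Let 𝒳, 𝒴, 𝒵 be finite-dimensional complex Hilbert spaces, let {Δ_1,…,Δ_n} be an orthogonal set of nonzero projection operators on 𝒳⊗𝒴, let {Λ_1,…,Λ_n} be an orthogonal set of nonzero projection operators on 𝒵, let Π = Σ_{k=1}^n Δ_k⊗Λ_k, and let U be a unitary operator on 𝒳⊗𝒴⊗𝒵 that is 𝒴→𝒳 causal on im(Π). If X is a unitary operator on 𝒳 such that U*(X⊗1_{𝒴⊗𝒵})U commutes with Π, then there exists a unitary operator W on 𝒳⊗𝒴 such that Π U*(X⊗1_{𝒴⊗𝒵})U Π = Π(W⊗1_𝒵)Π. -/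

import Mathlib

/-!
Write `Π = ∑ₖ Δₖ ⊗ Λₖ` and `A = U*(X ⊗ 1)U`. Linearising causality, every `M` with `ΠMΠ = M` and
`Tr_𝒵 M = 0` has `Tr_{𝒴⊗𝒵}(UMU*) = 0`, hence `tr(MA) = tr(Tr_{𝒴⊗𝒵}(UMU*) X) = 0`. By duality for
the trace pairing, `ΠAΠ` is then a compression `Π(R ⊗ 1)Π = ∑ₖ ΔₖRΔₖ ⊗ Λₖ`. As `A` is unitary
and commutes with `Π`, `ΠAΠ` is unitary on `im Π`, so each block `ΔₖRΔₖ` is unitary on `im Δₖ`;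
their sum plus `1 - ∑ₖ Δₖ` is the required `W`.
-/

open Matrix
open scoped Kronecker ComplexOrder

/-- The partial trace over the factor `𝒵` of an operator on `𝒳 ⊗ 𝒴 ⊗ 𝒵`,
represented as a matrix over the index set `(ιX × ιY) × ιZ`. -/
noncomputable def ptraceZ3 {ιX ιY ιZ : Type*} [Fintype ιZ]
    (M : Matrix ((ιX × ιY) × ιZ) ((ιX × ιY) × ιZ) ℂ) :
    Matrix (ιX × ιY) (ιX × ιY) ℂ :=
  Matrix.of fun w w' => ∑ z, M (w, z) (w', z)

/-- The partial trace over the factor `𝒴 ⊗ 𝒵` of an operator on `𝒳 ⊗ 𝒴 ⊗ 𝒵`. -/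
noncomputable def ptraceYZ3 {ιX ιY ιZ : Type*} [Fintype ιY] [Fintype ιZ]
    (M : Matrix ((ιX × ιY) × ιZ) ((ιX × ιY) × ιZ) ℂ) :
    Matrix ιX ιX ℂ :=
  Matrix.of fun x x' => ∑ y, ∑ z, M ((x, y), z) ((x', y), z)

/-- `U` is `𝒴 → 𝒳` causal on the subspace `V ⊆ 𝒳 ⊗ 𝒴 ⊗ 𝒵`: for all density operators
`ρ, σ` supported on `V` with equal partial traces over `𝒵`, the states
`U ρ U*` and `U σ U*` have equal partial traces over `𝒴 ⊗ 𝒵`. -/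
def IsCausalOn {ιX ιY ιZ : Type*} [Fintype ιX] [Fintype ιY] [Fintype ιZ]
    (U : Matrix ((ιX × ιY) × ιZ) ((ιX × ιY) × ιZ) ℂ)
    (V : Submodule ℂ (((ιX × ιY) × ιZ) → ℂ)) : Prop :=
  ∀ ρ σ : Matrix ((ιX × ιY) × ιZ) ((ιX × ιY) × ιZ) ℂ,
    ρ.PosSemidef → ρ.trace = 1 → LinearMap.range ρ.mulVecLin ≤ V →
    σ.PosSemidef → σ.trace = 1 → LinearMap.range σ.mulVecLin ≤ V →
    ptraceZ3 ρ = ptraceZ3 σ →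
    ptraceYZ3 (U * ρ * Uᴴ) = ptraceYZ3 (U * σ * Uᴴ)

lemma Finset.sum_mul_sum_of_pairwise {ι A : Type*} [Fintype ι] [NonUnitalNonAssocSemiring A]
    {a b : ι → A} (h : Pairwise fun i j => a i * b j = 0) :
    (∑ i, a i) * ∑ j, b j = ∑ i, a i * b i := by
  classical
  rw [Finset.sum_mul_sum]
  exact Finset.sum_congr rfl fun i _ =>
    Finset.sum_eq_single i (fun j _ hji => h hji.symm) (by simp)

lemma IsIdempotentElem.mul_mul_self_of_commute {M : Type*} [Semigroup M] {p u : M}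
    (hp : IsIdempotentElem p) (hup : Commute u p) : p * u * p = u * p := by
  rw [mul_assoc, hup.eq, ← mul_assoc, hp.eq]

section OrthogonalIdempotents

variable {ι A : Type*} [Semiring A] {e : ι → A}

lemma OrthogonalIdempotents.mul_eq_zero_of_ne (he : OrthogonalIdempotents e) {i j : ι}
    {x y : A} (hij : i ≠ j) (hx : x * e i = x) (hy : e j * y = y) : x * y = 0 := by
  rw [← hx, ← hy, mul_assoc, ← mul_assoc (e i), he.ortho hij, zero_mul, mul_zero]

lemma OrthogonalIdempotents.sum_mul_sum_of_mul_eq [Fintype ι] (he : OrthogonalIdempotents e)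
    {x y : ι → A} (hx : ∀ i, x i * e i = x i) (hy : ∀ i, e i * y i = y i) :
    (∑ i, x i) * ∑ i, y i = ∑ i, x i * y i :=
  Finset.sum_mul_sum_of_pairwise fun _ _ hij => he.mul_eq_zero_of_ne hij (hx _) (hy _)

end OrthogonalIdempotents

section StarMul

variable {A : Type*} [Monoid A] [StarMul A] {p u : A}

lemma IsStarProjection.compression_mul_star_self (hp : IsStarProjection p) (hu : u ∈ unitary A)
    (hup : Commute u p) : p * u * p * star (p * u * p) = p := by
  rw [hp.isIdempotentElem.mul_mul_self_of_commute hup, star_mul, hp.isSelfAdjoint.star_eq,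
    mul_assoc, ← mul_assoc p, hp.isIdempotentElem.eq, ← mul_assoc, hup.eq, mul_assoc,
    Unitary.mul_star_self_of_mem hu, mul_one]

lemma IsStarProjection.star_compression_mul_self (hp : IsStarProjection p) (hu : u ∈ unitary A)
    (hup : Commute u p) : star (p * u * p) * (p * u * p) = p := by
  rw [hp.isIdempotentElem.mul_mul_self_of_commute hup, star_mul, hp.isSelfAdjoint.star_eq,
    mul_assoc, ← mul_assoc (star u), Unitary.star_mul_self_of_mem hu, one_mul,
    hp.isIdempotentElem.eq]

end StarMul

section StarRing

variable {A : Type*} [Ring A] [StarRing A]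

lemma IsStarProjection.add_one_sub_mem_unitary {p c : A} (hp : IsStarProjection p)
    (hcc : c * star c = p) (hcc' : star c * c = p) (hpc : p * c = c) (hcp : c * p = c) :
    c + (1 - p) ∈ unitary A := by
  have hcp' : star c * p = star c := by
    rw [← hp.isSelfAdjoint.star_eq, ← star_mul, hpc]
  have hpc' : p * star c = star c := by
    rw [← hp.isSelfAdjoint.star_eq, ← star_mul, hcp]
  rw [Unitary.mem_iff]
  simp only [star_add, star_sub, star_one, hp.isSelfAdjoint.star_eq, mul_add, add_mul, mul_sub,
    sub_mul, mul_one, one_mul, hcc, hcc', hpc, hcp, hcp', hpc', hp.isIdempotentElem.eq]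
  constructor <;> abel

theorem OrthogonalIdempotents.exists_mem_unitary_forall_mul_mul_eq {ι : Type*} [Fintype ι]
    {e c : ι → A} (he : OrthogonalIdempotents e) (he' : ∀ i, IsSelfAdjoint (e i))
    (hec : ∀ i, e i * c i = c i) (hce : ∀ i, c i * e i = c i)
    (hcc : ∀ i, c i * star (c i) = e i) (hcc' : ∀ i, star (c i) * c i = e i) :
    ∃ w ∈ unitary A, ∀ i, e i * w * e i = c i := by
  have hec' : ∀ i, star (c i) * e i = star (c i) := fun i => by
    rw [← (he' i).star_eq, ← star_mul, hec]
  have hce' : ∀ i, e i * star (c i) = star (c i) := fun i => by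
    rw [← (he' i).star_eq, ← star_mul, hce]
  have hd : IsStarProjection (∑ i, e i) :=
    ⟨he.isIdempotentElem_sum, isSelfAdjoint_sum _ fun i _ => he' i⟩
  have hdc : (∑ i, e i) * ∑ i, c i = ∑ i, c i :=
    (he.sum_mul_sum_of_mul_eq (fun i => (he.idem i).eq) hec).trans (by simp only [hec])
  have hcd : (∑ i, c i) * ∑ i, e i = ∑ i, c i :=
    (he.sum_mul_sum_of_mul_eq hce fun i => (he.idem i).eq).trans (by simp only [hce])
  have hccd : (∑ i, c i) * star (∑ i, c i) = ∑ i, e i := by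
    rw [star_sum, he.sum_mul_sum_of_mul_eq hce hce']
    simp only [hcc]
  have hccd' : star (∑ i, c i) * (∑ i, c i) = ∑ i, e i := by
    rw [star_sum, he.sum_mul_sum_of_mul_eq hec' hec]
    simp only [hcc']
  refine ⟨_, hd.add_one_sub_mem_unitary hccd hccd' hdc hcd, fun i => ?_⟩
  have hic : e i * ∑ j, c j = c i := by
    rw [Finset.mul_sum, Finset.sum_eq_single i
      (fun j _ hji => he.mul_eq_zero_of_ne hji.symm (he.idem i).eq (hec j)) (by simp), hec]
  rw [mul_add, mul_sub, mul_one, he.mul_sum_of_mem (Finset.mem_univ i), sub_self, add_zero, hic,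
    hce]

end StarRing

namespace Matrix

section PartialTrace

variable {α β R : Type*} [Fintype β] [CommSemiring R]

def partialTrace : Matrix (α × β) (α × β) R →ₗ[R] Matrix α α R where
  toFun M := of fun i j => ∑ b, M (i, b) (j, b)
  map_add' M N := by ext; simp [Finset.sum_add_distrib]
  map_smul' c M := by ext; simp [Finset.mul_sum]

lemma partialTrace_apply (M : Matrix (α × β) (α × β) R) (i j : α) :
    partialTrace M i j = ∑ b, M (i, b) (j, b) := rfl

lemma partialTrace_conjTranspose [StarRing R] (M : Matrix (α × β) (α × β) R) :
    partialTrace Mᴴ = (partialTrace M)ᴴ := by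
  ext; simp [partialTrace_apply]

variable [Fintype α]

lemma trace_partialTrace (M : Matrix (α × β) (α × β) R) : (partialTrace M).trace = M.trace := by
  simp [trace, partialTrace_apply, Fintype.sum_prod_type]

lemma trace_partialTrace_mul [DecidableEq β] (M : Matrix (α × β) (α × β) R) (A : Matrix α α R) :
    (partialTrace M * A).trace = (M * (A ⊗ₖ 1)).trace := by
  simp [trace, mul_apply, partialTrace_apply, Fintype.sum_prod_type, one_apply, Finset.sum_mul]
  exact Finset.sum_congr rfl fun _ _ => Finset.sum_comm

lemma partialTrace_eq_zero_iff [DecidableEq β] {M : Matrix (α × β) (α × β) R} :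
    partialTrace M = 0 ↔ ∀ A : Matrix α α R, (M * (A ⊗ₖ 1)).trace = 0 := by
  simp [ext_iff_trace_mul_right (A := partialTrace M) (B := 0), trace_partialTrace_mul]

end PartialTrace

lemma exists_trace_mul_eq {n R : Type*} [Fintype n] [DecidableEq n] [CommSemiring R]
    (φ : Module.Dual R (Matrix n n R)) : ∃ N : Matrix n n R, ∀ M, φ M = (N * M).trace := by
  refine ⟨of fun j i => φ (single i j 1), fun M => ?_⟩
  conv_lhs => rw [matrix_eq_sum_single M]
  have hsingle : ∀ i j, single i j (M i j) = M i j • single i j (1 : R) := by simp [smul_single]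
  simp only [map_sum, hsingle, map_smul, smul_eq_mul, trace, diag, mul_apply, of_apply]
  exact Finset.sum_comm.trans (by simp only [mul_comm])

lemma range_mulVecLin_le_of_mul_eq {n R : Type*} [Fintype n] [CommSemiring R]
    {P N : Matrix n n R} (h : P * N = N) :
    LinearMap.range N.mulVecLin ≤ LinearMap.range P.mulVecLin := by
  rw [← h, mulVecLin_mul]
  exact LinearMap.range_comp_le_range _ _

lemma IsHermitian.exists_posSemidef_add_smul_one {n 𝕜 : Type*} [Fintype n] [DecidableEq n]
    [RCLike 𝕜] {A : Matrix n n 𝕜} (hA : A.IsHermitian) :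
    ∃ c : ℝ, 0 < c ∧ (A + (c : 𝕜) • 1).PosSemidef := by
  obtain ⟨c, hc0, hc⟩ : ∃ c : ℝ, 0 < c ∧ ∀ i, 0 ≤ hA.eigenvalues i + c :=
    ⟨1 + ∑ i, |hA.eigenvalues i|, by positivity, fun i => by
      linarith [neg_abs_le (hA.eigenvalues i), Finset.single_le_sum
        (fun j _ => abs_nonneg (hA.eigenvalues j)) (Finset.mem_univ i)]⟩
  refine ⟨c, hc0, ?_⟩
  rw [hA.spectral_theorem, ← map_one (Unitary.conjStarAlgAut 𝕜 _ hA.eigenvectorUnitary),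
    ← map_smul, ← map_add, Unitary.conjStarAlgAut_apply, star_eq_conjTranspose,
    ← diagonal_one, ← diagonal_smul, diagonal_add]
  refine (PosSemidef.diagonal fun i => ?_).mul_mul_conjTranspose_same _
  simpa using (RCLike.ofReal_nonneg (K := 𝕜)).mpr (hc i)

section Kronecker

variable {ι m p : Type*} [Fintype ι] [Fintype m] [Fintype p] [DecidableEq p]

lemma sum_kronecker_mul_sum_kronecker {R : Type*} [CommSemiring R] {Λ : ι → Matrix p p R}
    (hΛ : OrthogonalIdempotents Λ) (B D : ι → Matrix m m R) :
    (∑ k, B k ⊗ₖ Λ k) * (∑ k, D k ⊗ₖ Λ k) = ∑ k, (B k * D k) ⊗ₖ Λ k := by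
  rw [Finset.sum_mul_sum_of_pairwise fun j k hjk => by
    dsimp only
    rw [← mul_kronecker_mul, hΛ.ortho hjk, kronecker_zero]]
  simp only [← mul_kronecker_mul, (hΛ.idem _).eq]

lemma sum_kronecker_mul_kronecker_one_mul {R : Type*} [CommSemiring R] {Λ : ι → Matrix p p R}
    (hΛ : OrthogonalIdempotents Λ) (B D : ι → Matrix m m R) (A : Matrix m m R) :
    (∑ k, B k ⊗ₖ Λ k) * (A ⊗ₖ (1 : Matrix p p R)) * (∑ k, D k ⊗ₖ Λ k) =
      ∑ k, (B k * A * D k) ⊗ₖ Λ k := by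
  have hA : (∑ k, B k ⊗ₖ Λ k) * (A ⊗ₖ (1 : Matrix p p R)) = ∑ k, (B k * A) ⊗ₖ Λ k := by
    rw [Finset.sum_mul]
    exact Finset.sum_congr rfl fun k _ => by rw [← mul_kronecker_mul, mul_one]
  rw [hA, sum_kronecker_mul_sum_kronecker hΛ]

lemma isStarProjection_sum_kronecker {R : Type*} [CommSemiring R] [StarRing R]
    {Δ : ι → Matrix m m R} {Λ : ι → Matrix p p R} (hΔ : ∀ k, IsStarProjection (Δ k))
    (hΛ : OrthogonalIdempotents Λ) (hΛh : ∀ k, (Λ k).IsHermitian) :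
    IsStarProjection (∑ k, Δ k ⊗ₖ Λ k) where
  isIdempotentElem := by
    simp only [IsIdempotentElem, sum_kronecker_mul_sum_kronecker hΛ, (hΔ _).isIdempotentElem.eq]
  isSelfAdjoint := by
    simp only [IsSelfAdjoint, star_sum, star_eq_conjTranspose, conjTranspose_kronecker,
      (hΔ _).isSelfAdjoint.isHermitian.eq, (hΛh _).eq]

lemma sum_kronecker_injective {R : Type*} [CommRing R] [IsDomain R] {Λ : ι → Matrix p p R}
    (hΛ : OrthogonalIdempotents Λ) (hΛ0 : ∀ k, Λ k ≠ 0) {B D : ι → Matrix m m R}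
    (h : ∑ k, B k ⊗ₖ Λ k = ∑ k, D k ⊗ₖ Λ k) : B = D := by
  classical
  funext k
  have hk : ∀ E : ι → Matrix m m R, (∑ j, E j ⊗ₖ Λ j) * ((1 : Matrix m m R) ⊗ₖ Λ k) =
      E k ⊗ₖ Λ k := by
    intro E
    simp only [Finset.sum_mul, ← mul_kronecker_mul, mul_one, hΛ.mul_eq, apply_ite,
      kronecker_zero, Finset.sum_ite_eq', Finset.mem_univ, if_true]
  have hBD := congrArg (· * ((1 : Matrix m m R) ⊗ₖ Λ k)) h
  simp only [hk] at hBD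
  obtain ⟨z, w, hzw⟩ : ∃ z w, Λ k z w ≠ 0 := by
    by_contra! h0
    exact hΛ0 k (ext h0)
  ext i j
  simpa [hzw] using congrFun (congrFun hBD (i, z)) (j, w)

theorem exists_mem_unitary_compression_eq {K : Type*} [Field K] [StarRing K] [DecidableEq m]
    {Δ : ι → Matrix m m K} {Λ : ι → Matrix p p K}
    (hΔ : OrthogonalIdempotents Δ) (hΔh : ∀ k, (Δ k).IsHermitian)
    (hΛ : OrthogonalIdempotents Λ) (hΛh : ∀ k, (Λ k).IsHermitian) (hΛ0 : ∀ k, Λ k ≠ 0)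
    {P : Matrix (m × p) (m × p) K} (hP : P = ∑ k, Δ k ⊗ₖ Λ k) {R : Matrix m m K}
    (hT : P * (R ⊗ₖ 1) * P * star (P * (R ⊗ₖ 1) * P) = P)
    (hT' : star (P * (R ⊗ₖ 1) * P) * (P * (R ⊗ₖ 1) * P) = P) :
    ∃ W ∈ unitary (Matrix m m K), P * (R ⊗ₖ 1) * P = P * (W ⊗ₖ 1) * P := by
  subst hP
  set C : ι → Matrix m m K := fun k => Δ k * R * Δ k
  have hC : (∑ k, Δ k ⊗ₖ Λ k) * (R ⊗ₖ 1) * (∑ k, Δ k ⊗ₖ Λ k) = ∑ k, C k ⊗ₖ Λ k :=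
    sum_kronecker_mul_kronecker_one_mul hΛ Δ Δ R
  have hCstar : star (∑ k, C k ⊗ₖ Λ k) = ∑ k, star (C k) ⊗ₖ Λ k := by
    simp only [star_sum, star_eq_conjTranspose, conjTranspose_kronecker, (hΛh _).eq]
  rw [hC, hCstar, sum_kronecker_mul_sum_kronecker hΛ] at hT hT'
  have hΔC : ∀ k, Δ k * C k = C k := fun k => by
    simp only [C, ← mul_assoc, (hΔ.idem k).eq]
  have hCΔ : ∀ k, C k * Δ k = C k := fun k => by
    simp only [C, mul_assoc, (hΔ.idem k).eq]
  obtain ⟨W, hW, hWC⟩ := hΔ.exists_mem_unitary_forall_mul_mul_eq (fun k => (hΔh k).isSelfAdjoint)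
    hΔC hCΔ (congrFun (sum_kronecker_injective hΛ hΛ0 hT))
    (congrFun (sum_kronecker_injective hΛ hΛ0 hT'))
  refine ⟨W, hW, ?_⟩
  rw [hC, sum_kronecker_mul_kronecker_one_mul hΛ]
  simp only [hWC]

end Kronecker

theorem exists_compression_eq_of_forall_trace_mul_eq_zero {m p K : Type*} [Fintype m] [Fintype p]
    [DecidableEq m] [DecidableEq p] [Field K] {P A : Matrix (m × p) (m × p) K}
    (hP : IsIdempotentElem P)
    (hA : ∀ M, P * M * P = M → partialTrace M = 0 → (M * A).trace = 0) :
    ∃ R : Matrix m m K, P * A * P = P * (R ⊗ₖ 1) * P := by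
  let f : Matrix m m K →ₗ[K] Matrix (m × p) (m × p) K :=
    { toFun R := P * (R ⊗ₖ 1) * P
      map_add' R S := by simp only [add_kronecker, mul_add, add_mul]
      map_smul' c R := by
        simp only [smul_kronecker, Matrix.mul_smul, Matrix.smul_mul, RingHom.id_apply] }
  suffices P * A * P ∈ LinearMap.range f from
    let ⟨R, hR⟩ := this; ⟨R, hR.symm⟩
  rw [← Subspace.forall_mem_dualAnnihilator_apply_eq_zero_iff]
  intro φ hφ
  obtain ⟨N, hN⟩ := exists_trace_mul_eq φ
  have hNf : ∀ R : Matrix m m K, (P * N * P * (R ⊗ₖ 1)).trace = 0 := fun R => by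
    have := (Submodule.mem_dualAnnihilator _).mp hφ (f R) ⟨R, rfl⟩
    rwa [hN, show f R = P * (R ⊗ₖ 1) * P from rfl, ← mul_assoc, ← mul_assoc, trace_mul_comm,
      ← mul_assoc, ← mul_assoc] at this
  have hPNP : P * (P * N * P) * P = P * N * P := by
    rw [← mul_assoc, ← mul_assoc, hP.eq, mul_assoc _ P P, hP.eq]
  rw [hN, ← mul_assoc, ← mul_assoc, trace_mul_comm, ← mul_assoc, ← mul_assoc]
  exact hA _ hPNP (partialTrace_eq_zero_iff.mpr hNf)

end Matrix

section Causal

variable {ιX ιY ιZ : Type*} [Fintype ιX] [Fintype ιY] [Fintype ιZ]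
  [DecidableEq ιX] [DecidableEq ιY] [DecidableEq ιZ]
  {U P M : Matrix ((ιX × ιY) × ιZ) ((ιX × ιY) × ιZ) ℂ}

/-- `M` is a multiple of `ρ - σ` for the states `σ = P / tr P` and `ρ = σ + r M`, where `r > 0`
is small enough for `ρ` to be positive. -/
theorem IsCausalOn.partialTrace_conj_eq_zero_of_isHermitian
    (hU : IsCausalOn U (LinearMap.range P.mulVecLin)) (hP : IsStarProjection P)
    (hM : M.IsHermitian) (hPM : P * M * P = M) (hM0 : partialTrace M = 0) :
    partialTrace (partialTrace (U * M * Uᴴ)) = 0 := by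
  rcases eq_or_ne P 0 with rfl | hP0
  · rw [← hPM]
    simp
  have hPP : P * P = P := hP.isIdempotentElem.eq
  have hPh : Pᴴ = P := hP.isSelfAdjoint.star_eq
  have hPpsd : P.PosSemidef := by simpa [hPh, hPP] using posSemidef_self_mul_conjTranspose P
  have htP : 0 < P.trace :=
    lt_of_le_of_ne hPpsd.trace_nonneg (Ne.symm (hPpsd.trace_eq_zero_iff.not.mpr hP0))
  obtain ⟨c, hc0, hcM⟩ := hM.exists_posSemidef_add_smul_one
  have hcP : (0 : ℂ) < c * P.trace := mul_pos (by exact_mod_cast hc0) htP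
  set r : ℂ := (c * P.trace)⁻¹ with hr
  set σ := (P.trace)⁻¹ • P with hσ
  have hρ : σ + r • M = r • (P * (M + (c : ℂ) • 1) * Pᴴ) := by
    rw [hPh, mul_add, add_mul, hPM, Matrix.mul_smul, mul_one, Matrix.smul_mul, hPP, smul_add,
      smul_smul, add_comm, hσ, hr]
    congr 2
    field_simp
  have hσpsd : σ.PosSemidef := hPpsd.smul (inv_pos.mpr htP).le
  have hσtr : σ.trace = 1 := by rw [hσ, trace_smul, smul_eq_mul, inv_mul_cancel₀ htP.ne']
  have hPσ : P * σ = σ := by rw [hσ, Matrix.mul_smul, hPP]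
  have hr0 : 0 < r := inv_pos.mpr hcP
  clear_value r σ
  have hMtr : M.trace = 0 := by rw [← trace_partialTrace, hM0, trace_zero]
  have key := hU (σ + r • M) σ (hρ ▸ (hcM.mul_mul_conjTranspose_same P).smul hr0.le)
    (by rw [trace_add, trace_smul, hMtr, hσtr, smul_zero, add_zero])
    (range_mulVecLin_le_of_mul_eq (by rw [mul_add, hPσ, Matrix.mul_smul, ← hPM, ← mul_assoc,
      ← mul_assoc, hPP]))
    hσpsd hσtr (range_mulVecLin_le_of_mul_eq hPσ)
    (show partialTrace (σ + r • M) = partialTrace σ by rw [map_add, map_smul, hM0, smul_zero,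
      add_zero])
  change partialTrace (partialTrace _) = partialTrace (partialTrace _) at key
  rw [mul_add, add_mul, Matrix.mul_smul, Matrix.smul_mul, map_add, map_add, map_smul, map_smul,
    add_eq_left, smul_eq_zero] at key
  exact key.resolve_left hr0.ne'

theorem IsCausalOn.partialTrace_conj_eq_zero (hU : IsCausalOn U (LinearMap.range P.mulVecLin))
    (hP : IsStarProjection P) (hPM : P * M * P = M) (hM0 : partialTrace M = 0) :
    partialTrace (partialTrace (U * M * Uᴴ)) = 0 := by
  have hstar : P * star M * P = star M := by
    simpa [star_mul, hP.isSelfAdjoint.star_eq, mul_assoc] using congrArg star hPM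
  have hstar0 : partialTrace (star M) = 0 := by
    rw [star_eq_conjTranspose, partialTrace_conjTranspose, hM0, conjTranspose_zero]
  have hre := hU.partialTrace_conj_eq_zero_of_isHermitian hP (realPart M).2
    (by simp only [realPart_apply_coe, Matrix.mul_smul, Matrix.smul_mul, mul_add, add_mul, hPM,
      hstar])
    (by rw [realPart_apply_coe, LinearMap.map_smul_of_tower, map_add, hM0, hstar0, add_zero,
      smul_zero])
  have him := hU.partialTrace_conj_eq_zero_of_isHermitian hP (imaginaryPart M).2
    (by simp only [imaginaryPart_apply_coe, Matrix.mul_smul, Matrix.smul_mul, mul_sub, sub_mul,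
      hPM, hstar])
    (by rw [imaginaryPart_apply_coe, map_smul, LinearMap.map_smul_of_tower, map_sub, hM0, hstar0,
      sub_zero, smul_zero, smul_zero])
  rw [← realPart_add_I_smul_imaginaryPart M, mul_add, add_mul, Matrix.mul_smul, Matrix.smul_mul,
    map_add, map_add, map_smul, map_smul, hre, him, smul_zero, add_zero]

theorem IsCausalOn.trace_mul_conj_kronecker_one_eq_zero
    (hU : IsCausalOn U (LinearMap.range P.mulVecLin)) (hP : IsStarProjection P)
    (hPM : P * M * P = M) (hM0 : partialTrace M = 0) (X : Matrix ιX ιX ℂ) :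
    (M * (Uᴴ * ((X ⊗ₖ (1 : Matrix ιY ιY ℂ)) ⊗ₖ (1 : Matrix ιZ ιZ ℂ)) * U)).trace = 0 := by
  rw [← mul_assoc, ← mul_assoc, trace_mul_comm, ← mul_assoc, ← mul_assoc,
    ← trace_partialTrace_mul, ← trace_partialTrace_mul, hU.partialTrace_conj_eq_zero hP hPM hM0,
    zero_mul, trace_zero]

end Causal

theorem statement4_general {ιX ιY ιZ : Type*} [Fintype ιX] [Fintype ιY] [Fintype ιZ]
    [DecidableEq ιX] [DecidableEq ιY] [DecidableEq ιZ]
    (n : ℕ) (Δ : Fin n → Matrix (ιX × ιY) (ιX × ιY) ℂ) (Λ : Fin n → Matrix ιZ ιZ ℂ)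
    (hΔproj : ∀ k, (Δ k).IsHermitian ∧ Δ k * Δ k = Δ k)
    (hΔorth : ∀ j k, j ≠ k → Δ j * Δ k = 0)
    (hΛproj : ∀ k, (Λ k).IsHermitian ∧ Λ k * Λ k = Λ k)
    (hΛne : ∀ k, Λ k ≠ 0)
    (hΛorth : ∀ j k, j ≠ k → Λ j * Λ k = 0)
    (U : Matrix ((ιX × ιY) × ιZ) ((ιX × ιY) × ιZ) ℂ)
    (hU : U ∈ Matrix.unitaryGroup ((ιX × ιY) × ιZ) ℂ)
    (hUcausal : IsCausalOn U (LinearMap.range (∑ k, Δ k ⊗ₖ Λ k).mulVecLin))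
    (X : Matrix ιX ιX ℂ)
    (hX : X ∈ Matrix.unitaryGroup ιX ℂ)
    (hcomm :
      (Uᴴ * ((X ⊗ₖ (1 : Matrix ιY ιY ℂ)) ⊗ₖ (1 : Matrix ιZ ιZ ℂ)) * U) * (∑ k, Δ k ⊗ₖ Λ k) =
      (∑ k, Δ k ⊗ₖ Λ k) * (Uᴴ * ((X ⊗ₖ (1 : Matrix ιY ιY ℂ)) ⊗ₖ (1 : Matrix ιZ ιZ ℂ)) * U)) :
    ∃ W ∈ Matrix.unitaryGroup (ιX × ιY) ℂ,
      (∑ k, Δ k ⊗ₖ Λ k) *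
          (Uᴴ * ((X ⊗ₖ (1 : Matrix ιY ιY ℂ)) ⊗ₖ (1 : Matrix ιZ ιZ ℂ)) * U) *
          (∑ k, Δ k ⊗ₖ Λ k) =
        (∑ k, Δ k ⊗ₖ Λ k) * (W ⊗ₖ (1 : Matrix ιZ ιZ ℂ)) * (∑ k, Δ k ⊗ₖ Λ k) := by
  have hΔ : OrthogonalIdempotents Δ := ⟨fun k => (hΔproj k).2, hΔorth⟩
  have hΛ : OrthogonalIdempotents Λ := ⟨fun k => (hΛproj k).2, hΛorth⟩
  set P := ∑ k, Δ k ⊗ₖ Λ k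
  set A := Uᴴ * ((X ⊗ₖ (1 : Matrix ιY ιY ℂ)) ⊗ₖ (1 : Matrix ιZ ιZ ℂ)) * U
  have hP : IsStarProjection P :=
    isStarProjection_sum_kronecker (fun k => ⟨(hΔproj k).2, (hΔproj k).1⟩) hΛ fun k => (hΛproj k).1
  have hA : A ∈ unitary _ :=
    mul_mem (mul_mem (Unitary.star_mem hU)
      (kronecker_mem_unitary (kronecker_mem_unitary hX (one_mem _)) (one_mem _))) hU
  obtain ⟨R, hR⟩ := exists_compression_eq_of_forall_trace_mul_eq_zero hP.isIdempotentElem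
    fun M hPM hM0 => hUcausal.trace_mul_conj_kronecker_one_eq_zero hP hPM hM0 X
  obtain ⟨W, hW, hRW⟩ := exists_mem_unitary_compression_eq hΔ (fun k => (hΔproj k).1) hΛ
    (fun k => (hΛproj k).1) hΛne rfl (hR ▸ hP.compression_mul_star_self hA hcomm)
    (hR ▸ hP.star_compression_mul_self hA hcomm)
  exact ⟨W, hW, hR.trans hRW⟩

/-- Given orthogonal families of nonzero projections `Δ_k` on `𝒳 ⊗ 𝒴` and `Λ_k` on `𝒵`,
set `Π = Σ_k Δ_k ⊗ Λ_k`.  If `U` is a unitary on `𝒳 ⊗ 𝒴 ⊗ 𝒵` that is `𝒴 → 𝒳` causal on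
`im(Π)`, and `X` is a unitary on `𝒳` such that `U*(X ⊗ 1)U` commutes with `Π`, then there
is a unitary `W` on `𝒳 ⊗ 𝒴` with `Π U*(X ⊗ 1)U Π = Π (W ⊗ 1) Π`. -/
theorem statement4 {ιX ιY ιZ : Type*} [Fintype ιX] [Fintype ιY] [Fintype ιZ]
    [DecidableEq ιX] [DecidableEq ιY] [DecidableEq ιZ]
    (n : ℕ) (Δ : Fin n → Matrix (ιX × ιY) (ιX × ιY) ℂ) (Λ : Fin n → Matrix ιZ ιZ ℂ)
    (hΔproj : ∀ k, (Δ k).IsHermitian ∧ Δ k * Δ k = Δ k)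
    (hΔne : ∀ k, Δ k ≠ 0)
    (hΔorth : ∀ j k, j ≠ k → Δ j * Δ k = 0)
    (hΛproj : ∀ k, (Λ k).IsHermitian ∧ Λ k * Λ k = Λ k)
    (hΛne : ∀ k, Λ k ≠ 0)
    (hΛorth : ∀ j k, j ≠ k → Λ j * Λ k = 0)
    (U : Matrix ((ιX × ιY) × ιZ) ((ιX × ιY) × ιZ) ℂ)
    (hU : U ∈ Matrix.unitaryGroup ((ιX × ιY) × ιZ) ℂ)
    (hUcausal : IsCausalOn U (LinearMap.range (∑ k, Δ k ⊗ₖ Λ k).mulVecLin))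
    (X : Matrix ιX ιX ℂ)
    (hX : X ∈ Matrix.unitaryGroup ιX ℂ)
    (hcomm :
      (Uᴴ * ((X ⊗ₖ (1 : Matrix ιY ιY ℂ)) ⊗ₖ (1 : Matrix ιZ ιZ ℂ)) * U) * (∑ k, Δ k ⊗ₖ Λ k) =
      (∑ k, Δ k ⊗ₖ Λ k) * (Uᴴ * ((X ⊗ₖ (1 : Matrix ιY ιY ℂ)) ⊗ₖ (1 : Matrix ιZ ιZ ℂ)) * U)) :
    ∃ W ∈ Matrix.unitaryGroup (ιX × ιY) ℂ,
      (∑ k, Δ k ⊗ₖ Λ k) *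
          (Uᴴ * ((X ⊗ₖ (1 : Matrix ιY ιY ℂ)) ⊗ₖ (1 : Matrix ιZ ιZ ℂ)) * U) *
          (∑ k, Δ k ⊗ₖ Λ k) =
        (∑ k, Δ k ⊗ₖ Λ k) * (W ⊗ₖ (1 : Matrix ιZ ιZ ℂ)) * (∑ k, Δ k ⊗ₖ Λ k) :=
  statement4_general n Δ Λ hΔproj hΔorth hΛproj hΛne hΛorth U hU hUcausal X hX hcomm
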